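/- Let n be a prime number and X ⊆ {0,1}^n a finite subset of binary words (ordered 0 < 1) stable under the cyclic shift c. Then the triple (X, X^inv(t), C) exhibits the cyclic sieving phenomenon. -/

import Mathlib

/-- The (leftward) cyclic shift on words of length `n`:
`c(w₁,…,wₙ) = (w₂,…,wₙ,w₁)`. -/
def cshift {A : Type*} {n : ℕ} (w : Fin n → A) : Fin n → A :=
  fun i => w ⟨((i : ℕ) + 1) % n, Nat.mod_lt _ i.pos⟩

/-- The major index of a word: `maj w = Σ_{1 ≤ i ≤ n-1, w_i > w_{i+1}} i`
(here positions are 0-indexed, so position `i : Fin n` is the `(i+1)`-st letter). -/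
def majIdx {A : Type*} [LinearOrder A] {n : ℕ} (w : Fin n → A) : ℕ :=
  ∑ i : Fin n,
    if h : (i : ℕ) + 1 < n then (if w ⟨(i : ℕ) + 1, h⟩ < w i then (i : ℕ) + 1 else 0) else 0

/-- The number of cyclic descents of a word, `cdes w = #{i : w_i > w_{i+1}}`
with indices read cyclically (`w_{n+1} := w_1`). -/
def cdes {A : Type*} [LinearOrder A] {n : ℕ} (w : Fin n → A) : ℕ :=
  (Finset.univ.filter fun i : Fin n =>
    w ⟨((i : ℕ) + 1) % n, Nat.mod_lt _ i.pos⟩ < w i).card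

/-- The inversion number of a word: `inv w = #{(i,j) : i < j, w_i > w_j}`. -/
def invNum {A : Type*} [LinearOrder A] {n : ℕ} (w : Fin n → A) : ℕ :=
  (Finset.univ.filter fun p : Fin n × Fin n => p.1 < p.2 ∧ w p.2 < w p.1).card

/-- The Hamming weight of a binary word: the number of ones. -/
def wt {n : ℕ} (w : Fin n → Bool) : ℕ :=
  (Finset.univ.filter fun i => w i = true).card

/-- The triple `(X, Σ_{x ∈ X} t^{stat x}, C)` exhibits the cyclic sieving phenomenon,
where `C` is the cyclic group of order `n` generated by the cyclic shift `c` acting on `X`: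
for every `d`, the number of fixed points of `c^d` on `X` equals the evaluation of
`Σ_{x ∈ X} t^{stat x}` at `t = ζ^d`, with `ζ = exp(2πi/n)`. -/
def exhibitsCSP {A : Type*} [DecidableEq A] {n : ℕ} (X : Finset (Fin n → A))
    (stat : (Fin n → A) → ℕ) : Prop :=
  ∀ d : ℕ,
    ((X.filter fun v => cshift^[d] v = v).card : ℂ) =
      ∑ v ∈ X, Complex.exp (2 * (Real.pi : ℂ) * Complex.I / n) ^ (d * stat v)

/-!
If `n ∣ d` both sides equal `#X`. Otherwise, `n` being prime, `c^d` fixes exactly the constant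
words, whose inversion number is `0`, so the non-constant words must contribute `0` to
`Σ ζ^{d·inv}`. Moving the first letter of a binary word to the end changes `inv` by its weight `k`
modulo `n`, and `k` is shift-invariant; hence on the shift-stable set of non-constant words of
weight `k` (so `0 < k < n`) the shift multiplies the sum by `ζ^{dk} ≠ 1`, and the sum vanishes.
-/

open Finset

theorem Finset.sum_eq_zero_of_comp_eq_mul {ι K : Type*} [CommRing K] [IsDomain K]
    {s : Finset ι} {σ : ι → ι} (hσ : Set.MapsTo σ s s) (hσ_inj : Set.InjOn σ s) {f g : ι → K}
    (hg : ∀ i ∈ s, g (σ i) = g i) (hf : ∀ i ∈ s, f (σ i) = g i * f i)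
    (hg_ne : ∀ i ∈ s, g i ≠ 1) : ∑ i ∈ s, f i = 0 := by
  classical
  rw [← sum_fiberwise_of_maps_to (fun i hi => mem_image_of_mem g hi)]
  refine sum_eq_zero fun a ha => ?_
  obtain ⟨i₀, hi₀, rfl⟩ := mem_image.1 ha
  set t := s.filter (g · = g i₀)
  have ht : Set.MapsTo σ t t := fun i hi => by
    simp only [t, mem_coe, mem_filter] at hi ⊢
    exact ⟨hσ hi.1, (hg i hi.1).trans hi.2⟩
  have ht_inj : Set.InjOn σ t := hσ_inj.mono (coe_subset.2 (filter_subset _ _))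
  have h_perm : ∑ i ∈ t, f (σ i) = ∑ i ∈ t, f i :=
    sum_nbij σ ht ht_inj (surjOn_of_injOn_of_card_le σ ht ht_inj le_rfl) fun _ _ => rfl
  have h_twist : ∑ i ∈ t, f (σ i) = g i₀ * ∑ i ∈ t, f i := by
    rw [mul_sum]
    refine sum_congr rfl fun i hi => ?_
    rw [hf i (mem_filter.1 hi).1, (mem_filter.1 hi).2]
  have : (g i₀ - 1) * ∑ i ∈ t, f i = 0 := by linear_combination h_twist.symm.trans h_perm
  exact (mul_eq_zero.1 this).resolve_left (sub_ne_zero.2 (hg_ne i₀ hi₀))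

theorem IsPrimitiveRoot.pow_eq_pow_of_modEq {M : Type*} [CommMonoid M] {ζ : M} {n a b : ℕ}
    (hζ : IsPrimitiveRoot ζ n) (h : a ≡ b [MOD n]) : ζ ^ a = ζ ^ b := by
  rw [← pow_mod_orderOf, ← hζ.eq_orderOf, h, hζ.eq_orderOf, pow_mod_orderOf]

section Shift

variable {A : Type*} {n : ℕ}

lemma cshift_iterate_apply (m : ℕ) (w : Fin n → A) (i : Fin n) :
    cshift^[m] w i = w ⟨((i : ℕ) + m) % n, Nat.mod_lt _ i.pos⟩ := by
  induction m generalizing w with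
  | zero => simp [Nat.mod_eq_of_lt i.isLt]
  | succ m ih =>
    rw [Function.iterate_succ_apply, ih]
    simp only [cshift, Nat.mod_add_mod, Nat.add_assoc]

lemma cshift_iterate_self (w : Fin n → A) : cshift^[n] w = w := by
  funext i
  simp [cshift_iterate_apply, Nat.mod_eq_of_lt i.isLt]

lemma iterate_cshift_of_dvd {d : ℕ} (hd : n ∣ d) (w : Fin n → A) : cshift^[d] w = w := by
  obtain ⟨k, rfl⟩ := hd
  rw [Function.iterate_mul]
  exact Function.iterate_fixed (cshift_iterate_self w) k

lemma cshift_injective : Function.Injective (cshift : (Fin n → A) → Fin n → A) := by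
  rcases n with _ | m
  · exact fun u v _ => Subsingleton.elim u v
  · refine Function.LeftInverse.injective (g := cshift^[m]) fun w => ?_
    rw [← Function.iterate_succ_apply, cshift_iterate_self]

lemma iterate_cshift_eq_self_iff (hp : n.Prime) {d : ℕ} (hd : ¬ n ∣ d) {w : Fin n → A} :
    cshift^[d] w = w ↔ cshift w = w := by
  refine ⟨fun h => ?_, fun h => Function.iterate_fixed h d⟩
  have hper : Function.IsPeriodicPt cshift (d.gcd n) w :=
    Function.IsPeriodicPt.gcd h (cshift_iterate_self w)
  rwa [((hp.coprime_iff_not_dvd.2 hd).symm).gcd_eq_one] at hper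

lemma eq_of_cshift_eq_self {w : Fin n → A} (h : cshift w = w) (i j : Fin n) : w i = w j := by
  have h_zero (k : Fin n) : w k = w ⟨0, k.pos⟩ := by
    have := cshift_iterate_apply (k : ℕ) w ⟨0, k.pos⟩
    rw [Function.iterate_fixed h] at this
    simp [this, Nat.mod_eq_of_lt k.isLt]
  rw [h_zero i, h_zero j]

lemma invNum_eq_zero_of_cshift_eq_self [LinearOrder A] {w : Fin n → A} (h : cshift w = w) :
    invNum w = 0 := by
  rw [invNum, card_eq_zero, filter_eq_empty_iff]
  rintro ⟨i, j⟩ - ⟨-, hlt⟩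
  exact (eq_of_cshift_eq_self h j i ▸ hlt).false

lemma cshift_cons {m : ℕ} (a : A) (u : Fin m → A) :
    cshift (Fin.cons a u : Fin (m + 1) → A) = Fin.snoc u a := by
  funext i
  refine Fin.lastCases ?_ (fun j => ?_) i
  · simp [cshift]
  · have : (⟨((j : ℕ) + 1) % (m + 1), Nat.mod_lt _ (by omega)⟩ : Fin (m + 1)) = j.succ :=
      Fin.ext (Nat.mod_eq_of_lt (by omega))
    simp [cshift, this]

lemma invNum_eq_sum [LinearOrder A] (w : Fin n → A) :
    invNum w = ∑ i, ∑ j, if i < j ∧ w j < w i then 1 else 0 := by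
  rw [invNum, card_filter, ← univ_product_univ, sum_product]

lemma invNum_cons [LinearOrder A] {m : ℕ} (a : A) (u : Fin m → A) :
    invNum (Fin.cons a u : Fin (m + 1) → A) = #{j | u j < a} + invNum u := by
  rw [invNum_eq_sum, invNum_eq_sum, card_filter]
  simp [Fin.sum_univ_succ, Fin.succ_pos, -sum_boole]

lemma invNum_snoc [LinearOrder A] {m : ℕ} (a : A) (u : Fin m → A) :
    invNum (Fin.snoc u a : Fin (m + 1) → A) = invNum u + #{j | a < u j} := by
  rw [invNum_eq_sum, invNum_eq_sum, card_filter]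
  simp [Fin.sum_univ_castSucc, sum_add_distrib, (Fin.castSucc_lt_last _).asymm, -sum_boole]

lemma wt_cons {m : ℕ} (a : Bool) (u : Fin m → Bool) :
    wt (Fin.cons a u : Fin (m + 1) → Bool) = wt u + if a then 1 else 0 := by
  rw [wt, wt, card_filter, card_filter]
  simp [Fin.sum_univ_succ, add_comm, -sum_boole]

lemma wt_snoc {m : ℕ} (a : Bool) (u : Fin m → Bool) :
    wt (Fin.snoc u a : Fin (m + 1) → Bool) = wt u + if a then 1 else 0 := by
  rw [wt, wt, card_filter, card_filter]
  simp [Fin.sum_univ_castSucc, -sum_boole]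

lemma invNum_cshift_cons_add [LinearOrder A] {m : ℕ} (a : A) (u : Fin m → A) :
    invNum (cshift (Fin.cons a u : Fin (m + 1) → A)) + #{j | u j < a} =
      invNum (Fin.cons a u : Fin (m + 1) → A) + #{j | a < u j} := by
  rw [cshift_cons, invNum_snoc, invNum_cons]
  ring

lemma wt_cshift (w : Fin n → Bool) : wt (cshift w) = wt w := by
  rcases n with _ | m
  · rw [Subsingleton.elim (cshift w) w]
  · induction w using Fin.consCases with
    | cons a u => rw [cshift_cons, wt_snoc, wt_cons]

lemma invNum_cshift_modEq (w : Fin n → Bool) :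
    invNum (cshift w) ≡ invNum w + wt w [MOD n] := by
  rcases n with _ | m
  · simp [invNum, wt]
  induction w using Fin.consCases with
  | cons a u =>
    have h := invNum_cshift_cons_add a u
    rw [wt_cons]
    cases a <;> simp only [Bool.lt_iff, Bool.false_eq_true, Bool.true_eq_false, and_false,
      false_and, true_and, and_true, filter_false, card_empty, add_zero, if_true, if_false] at h ⊢
    · rw [h, wt]
    · -- moving the leading `1` to the end destroys the `m - wt u` inversions it formed
      have h_split : #{j | u j = false} + wt u = m := by
        simpa [wt, add_comm] using card_filter_add_card_filter_not (s := univ) (u · = true)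
      calc invNum (cshift (Fin.cons true u : Fin (m + 1) → Bool))
          ≡ invNum (cshift (Fin.cons true u : Fin (m + 1) → Bool)) + (m + 1) [MOD m + 1] :=
            Nat.add_modEq_right.symm
        _ = _ := by omega

lemma cshift_eq_self_of_dvd_wt {w : Fin n → Bool} (h : n ∣ wt w) : cshift w = w := by
  have h_le : wt w ≤ n := (card_filter_le _ _).trans_eq (card_fin n)
  obtain h_all | h_none : (∀ i, w i = true) ∨ (∀ i, w i = false) := by
    rcases Nat.eq_zero_or_pos (wt w) with h0 | h0
    · right
      simpa [wt] using h0
    · left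
      have h_card : #{i | w i = true} = #(univ : Finset (Fin n)) := by
        rw [card_univ, Fintype.card_fin]
        exact le_antisymm h_le (Nat.le_of_dvd h0 h)
      simpa using card_filter_eq_iff.1 h_card
  all_goals funext i; simp [cshift, *]

lemma sum_pow_mul_invNum_eq_zero {K : Type*} [CommRing K] [IsDomain K] (hp : n.Prime) {ζ : K}
    (hζ : IsPrimitiveRoot ζ n) {d : ℕ} (hd : ¬ n ∣ d) {Y : Finset (Fin n → Bool)}
    (hY : ∀ w ∈ Y, cshift w ∈ Y) (hY_fix : ∀ w ∈ Y, cshift w ≠ w) :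
    ∑ w ∈ Y, ζ ^ (d * invNum w) = 0 := by
  refine sum_eq_zero_of_comp_eq_mul (σ := cshift) (g := fun w => ζ ^ (d * wt w)) hY
    cshift_injective.injOn (fun w _ => by rw [wt_cshift]) (fun w _ => ?_) (fun w hw h => ?_)
  · rw [← pow_add, ← mul_add, add_comm (wt w)]
    exact hζ.pow_eq_pow_of_modEq ((invNum_cshift_modEq w).mul_left d)
  · rw [hζ.pow_eq_one_iff_dvd] at h
    exact hY_fix w hw (cshift_eq_self_of_dvd_wt ((hp.dvd_mul.1 h).resolve_left hd))

end Shift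

/-- when n is prime, every shift-stable finite set of binary words
X ⊆ {0,1}^n gives a CSP triple (X, X^inv(t), C). -/
theorem stmt8 {n : ℕ} (hp : n.Prime)
    (X : Finset (Fin n → Bool)) (hX : ∀ w ∈ X, cshift w ∈ X) :
    exhibitsCSP X invNum := by
  intro d
  have hζ : IsPrimitiveRoot (Complex.exp (2 * Real.pi * Complex.I / n)) n :=
    Complex.isPrimitiveRoot_exp n hp.ne_zero
  by_cases hd : n ∣ d
  · rw [filter_true_of_mem fun w _ => iterate_cshift_of_dvd hd w,
      sum_congr rfl fun w _ => (hζ.pow_eq_one_iff_dvd _).2 (hd.mul_right _)]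
    simp
  · rw [filter_congr fun w _ => iterate_cshift_eq_self_iff hp hd,
      ← sum_filter_add_sum_filter_not X (fun w => cshift w = w),
      sum_pow_mul_invNum_eq_zero hp hζ hd (Y := X.filter fun w => cshift w ≠ w) ?_ ?_]
    · rw [add_zero, sum_congr rfl fun w hw => by
        rw [invNum_eq_zero_of_cshift_eq_self (mem_filter.1 hw).2, mul_zero, pow_zero]]
      simp
    · intro w hw
      rw [mem_filter] at hw ⊢
      exact ⟨hX w hw.1, fun h => hw.2 (cshift_injective h)⟩
    · exact fun w hw => (mem_filter.1 hw).2
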